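/- Let H, X1, X2, X3 be binary random variables with X1, X2, X3 conditionally independent given H. With μ_{ij}, μ_{123} the central moments of (X1,X2,X3), Det P = μ_{123}² + 4μ_{12}μ_{13}μ_{23}, and μ̄_i = 1 − 2E[X_i]: for each i ∈ {1,2,3} and with {j,k} = {1,2,3}∖{i}, Det P ≤ ((1 + μ̄_i)μ_{jk} − μ_{123})² and Det P ≤ ((1 − μ̄_i)μ_{jk} + μ_{123})². -/

import Mathlib

open Finset

/-- Joint distribution of the tripod (naive Bayes) model: `X₁,X₂,X₃` are binary and
conditionally independent given the binary hidden variable `H`. -/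
noncomputable def tripodJoint (π : Fin 2 → ℝ) (q : Fin 3 → Fin 2 → Fin 2 → ℝ) :
    (Fin 3 → Fin 2) → ℝ :=
  fun x => ∑ h : Fin 2, π h * ∏ i : Fin 3, q i (x i) h

noncomputable def EV3 (p : (Fin 3 → Fin 2) → ℝ) (i : Fin 3) : ℝ :=
  ∑ x : Fin 3 → Fin 2, p x * ((x i : ℕ) : ℝ)

/-- `Cov(X_i, X_j) = μ_{ij}`. -/
noncomputable def cov3 (p : (Fin 3 → Fin 2) → ℝ) (i j : Fin 3) : ℝ :=
  ∑ x : Fin 3 → Fin 2, p x * (((x i : ℕ) : ℝ) - EV3 p i) * (((x j : ℕ) : ℝ) - EV3 p j)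

/-- `μ_{123} = E[∏ (X_i − EX_i)]`. -/
noncomputable def thirdCentral3 (p : (Fin 3 → Fin 2) → ℝ) : ℝ :=
  ∑ x : Fin 3 → Fin 2, p x * ∏ i : Fin 3, (((x i : ℕ) : ℝ) - EV3 p i)

/-- `μ̄_i = 1 − 2E[X_i]`. -/
noncomputable def mbar3 (p : (Fin 3 → Fin 2) → ℝ) (i : Fin 3) : ℝ := 1 - 2 * EV3 p i

/-!
Write `δ_i = P(X_i = 1 | H = 0) - P(X_i = 1 | H = 1)`. Conditional independence factors every
central moment through `H`: `μ_jk = π₀π₁ δ_j δ_k` and `μ_123 = π₀π₁(π₁ - π₀) δ₁δ₂δ₃`, so, as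
`(π₁ - π₀)² + 4π₀π₁ = 1`, `Det P = (μ_jk δ_i)²`. On the other side
`(1 + μ̄_i) μ_jk - μ_123 = μ_jk (P(X_i = 0 | H = 0) + P(X_i = 0 | H = 1))` and
`(1 - μ̄_i) μ_jk + μ_123 = μ_jk (P(X_i = 1 | H = 0) + P(X_i = 1 | H = 1))`, while `δ_i` is a
difference of the two summands in either bracket; `|x - y| ≤ x + y` for `x, y ≥ 0` concludes.
-/

theorem Fin.prod_univ_three_of_ne {M : Type*} [CommMonoid M] (f : Fin 3 → M) {i j k : Fin 3}
    (hij : i ≠ j) (hik : i ≠ k) (hjk : j ≠ k) : ∏ l, f l = f i * f j * f k := by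
  have huniv : ({i, j, k} : Finset (Fin 3)) = univ :=
    eq_univ_of_card _ (by rw [card_insert_of_notMem (by simp [hij, hik]), card_pair hjk]; rfl)
  rw [← huniv, prod_insert (by simp [hij, hik]), prod_pair hjk, mul_assoc]

section Tripod

variable {π : Fin 2 → ℝ} {q : Fin 3 → Fin 2 → Fin 2 → ℝ}

-- `δ_i` above, reading `q i a h` as `P(X_i = a | H = h)`.
def tripodContrast (q : Fin 3 → Fin 2 → Fin 2 → ℝ) (i : Fin 3) : ℝ := q i 1 0 - q i 1 1

lemma sum_tripodJoint_mul_prod (hq1 : ∀ i h, q i 0 h + q i 1 h = 1) (S : Finset (Fin 3))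
    (g : Fin 3 → Fin 2 → ℝ) :
    ∑ x, tripodJoint π q x * ∏ l ∈ S, g l (x l) =
      ∑ h, π h * ∏ l ∈ S, ∑ a, q l a h * g l a := by
  classical
  let g' : Fin 3 → Fin 2 → ℝ := fun l a => if l ∈ S then g l a else 1
  calc ∑ x, tripodJoint π q x * ∏ l ∈ S, g l (x l)
      = ∑ h, π h * ∑ x : Fin 3 → Fin 2, ∏ l, q l (x l) h * g' l (x l) := by
        simp_rw [tripodJoint, sum_mul, mul_sum, prod_mul_distrib, g', prod_ite_mem, univ_inter]
        rw [sum_comm]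
        simp only [mul_assoc]
    _ = ∑ h, π h * ∏ l, ∑ a, q l a h * g' l a := by simp_rw [Fintype.prod_sum]
    _ = ∑ h, π h * ∏ l ∈ S, ∑ a, q l a h * g l a := by
        have hmarg : ∀ l h, ∑ a, q l a h = 1 := by simpa [Fin.sum_univ_two] using hq1
        simp [g', mul_ite, hmarg]

lemma EV3_tripodJoint (hq1 : ∀ i h, q i 0 h + q i 1 h = 1) (i : Fin 3) :
    EV3 (tripodJoint π q) i = π 0 * q i 1 0 + π 1 * q i 1 1 := by
  have h := sum_tripodJoint_mul_prod (π := π) hq1 {i} (fun _ a => ((a : ℕ) : ℝ))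
  simp only [prod_singleton] at h
  simp [EV3, h, Fin.sum_univ_two]

lemma sum_mul_sub_EV3_tripodJoint (hπ1 : π 0 + π 1 = 1) (hq1 : ∀ i h, q i 0 h + q i 1 h = 1)
    (l : Fin 3) (h : Fin 2) :
    ∑ a, q l a h * (((a : ℕ) : ℝ) - EV3 (tripodJoint π q) l) =
      ![π 1, -π 0] h * tripodContrast q l := by
  rw [EV3_tripodJoint hq1, tripodContrast]
  fin_cases h <;> simp only [Fin.sum_univ_two] <;> norm_num
  · linear_combination -(π 0 * q l 1 0 + π 1 * q l 1 1) * hq1 l 0 - q l 1 0 * hπ1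
  · linear_combination -(π 0 * q l 1 0 + π 1 * q l 1 1) * hq1 l 1 - q l 1 1 * hπ1

lemma cov3_tripodJoint (hπ1 : π 0 + π 1 = 1) (hq1 : ∀ i h, q i 0 h + q i 1 h = 1)
    {i j : Fin 3} (hij : i ≠ j) :
    cov3 (tripodJoint π q) i j = π 0 * π 1 * tripodContrast q i * tripodContrast q j := by
  have h := sum_tripodJoint_mul_prod (π := π) hq1 {i, j}
    (fun l a => ((a : ℕ) : ℝ) - EV3 (tripodJoint π q) l)
  simp only [prod_pair hij, sum_mul_sub_EV3_tripodJoint hπ1 hq1, Fin.sum_univ_two] at h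
  simp only [cov3, mul_assoc, h, Matrix.cons_val_zero, Matrix.cons_val_one]
  linear_combination π 0 * π 1 * tripodContrast q i * tripodContrast q j * hπ1

lemma thirdCentral3_tripodJoint (hπ1 : π 0 + π 1 = 1) (hq1 : ∀ i h, q i 0 h + q i 1 h = 1) :
    thirdCentral3 (tripodJoint π q) = π 0 * π 1 * (π 1 - π 0) * ∏ l, tripodContrast q l := by
  have h := sum_tripodJoint_mul_prod (π := π) hq1 univ
    (fun l a => ((a : ℕ) : ℝ) - EV3 (tripodJoint π q) l)
  simp only [sum_mul_sub_EV3_tripodJoint hπ1 hq1, prod_mul_distrib, prod_const, card_univ,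
    Fintype.card_fin, Fin.sum_univ_two, Matrix.cons_val_zero, Matrix.cons_val_one] at h
  rw [thirdCentral3, h]
  linear_combination π 0 * π 1 * (π 1 - π 0) * (∏ l, tripodContrast q l) * hπ1


lemma hyperdet_tripodJoint (hπ1 : π 0 + π 1 = 1) (hq1 : ∀ i h, q i 0 h + q i 1 h = 1)
    {i j k : Fin 3} (hij : i ≠ j) (hik : i ≠ k) (hjk : j ≠ k) :
    thirdCentral3 (tripodJoint π q) ^ 2 + 4 * cov3 (tripodJoint π q) 0 1 *
        cov3 (tripodJoint π q) 0 2 * cov3 (tripodJoint π q) 1 2 =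
      (cov3 (tripodJoint π q) j k * tripodContrast q i) ^ 2 := by
  calc _ = (π 0 * π 1 * ∏ l, tripodContrast q l) ^ 2 := by
        rw [thirdCentral3_tripodJoint hπ1 hq1, cov3_tripodJoint hπ1 hq1 (by decide),
          cov3_tripodJoint hπ1 hq1 (by decide), cov3_tripodJoint hπ1 hq1 (by decide),
          Fin.prod_univ_three]
        -- `(π 1 - π 0) ^ 2 + 4 * π 0 * π 1 = (π 0 + π 1) ^ 2 = 1`
        linear_combination (π 0 * π 1 * tripodContrast q 0 * tripodContrast q 1 *
          tripodContrast q 2) ^ 2 * (π 0 + π 1 + 1) * hπ1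
    _ = _ := by
        rw [Fin.prod_univ_three_of_ne _ hij hik hjk, cov3_tripodJoint hπ1 hq1 hjk]
        ring

lemma one_add_mbar3_mul_cov3_sub_thirdCentral3_tripodJoint (hπ1 : π 0 + π 1 = 1)
    (hq1 : ∀ i h, q i 0 h + q i 1 h = 1) {i j k : Fin 3} (hij : i ≠ j) (hik : i ≠ k)
    (hjk : j ≠ k) :
    (1 + mbar3 (tripodJoint π q) i) * cov3 (tripodJoint π q) j k -
        thirdCentral3 (tripodJoint π q) =
      cov3 (tripodJoint π q) j k * (q i 0 0 + q i 0 1) := by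
  rw [mbar3, EV3_tripodJoint hq1, thirdCentral3_tripodJoint hπ1 hq1,
    Fin.prod_univ_three_of_ne _ hij hik hjk, cov3_tripodJoint hπ1 hq1 hjk]
  unfold tripodContrast
  set c := π 0 * π 1 * (q j 1 0 - q j 1 1) * (q k 1 0 - q k 1 1)
  linear_combination -c * hq1 i 0 - c * hq1 i 1 - c * (q i 1 0 + q i 1 1) * hπ1

lemma one_sub_mbar3_mul_cov3_add_thirdCentral3_tripodJoint (hπ1 : π 0 + π 1 = 1)
    (hq1 : ∀ i h, q i 0 h + q i 1 h = 1) {i j k : Fin 3} (hij : i ≠ j) (hik : i ≠ k)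
    (hjk : j ≠ k) :
    (1 - mbar3 (tripodJoint π q) i) * cov3 (tripodJoint π q) j k +
        thirdCentral3 (tripodJoint π q) =
      cov3 (tripodJoint π q) j k * (q i 1 0 + q i 1 1) := by
  rw [mbar3, EV3_tripodJoint hq1, thirdCentral3_tripodJoint hπ1 hq1,
    Fin.prod_univ_three_of_ne _ hij hik hjk, cov3_tripodJoint hπ1 hq1 hjk]
  unfold tripodContrast
  set c := π 0 * π 1 * (q j 1 0 - q j 1 1) * (q k 1 0 - q k 1 1)
  linear_combination c * (q i 1 0 + q i 1 1) * hπ1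

lemma tripodContrast_eq_sub_zero (hq1 : ∀ i h, q i 0 h + q i 1 h = 1) (i : Fin 3) :
    tripodContrast q i = q i 0 1 - q i 0 0 := by
  rw [tripodContrast]
  linear_combination hq1 i 0 - hq1 i 1

lemma sq_mul_sub_le_sq_mul_add (c : ℝ) {x y : ℝ} (hx : 0 ≤ x) (hy : 0 ≤ y) :
    (c * (x - y)) ^ 2 ≤ (c * (x + y)) ^ 2 := by
  nlinarith [mul_nonneg (mul_nonneg hx hy) (sq_nonneg c)]

theorem tripod_hyperdet_sign_bounds_of_ne (hq : ∀ i a h, 0 ≤ q i a h) (hπ1 : π 0 + π 1 = 1)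
    (hq1 : ∀ i h, q i 0 h + q i 1 h = 1) {i j k : Fin 3} (hij : i ≠ j) (hik : i ≠ k)
    (hjk : j ≠ k) :
    thirdCentral3 (tripodJoint π q) ^ 2 + 4 * cov3 (tripodJoint π q) 0 1 *
        cov3 (tripodJoint π q) 0 2 * cov3 (tripodJoint π q) 1 2 ≤
      ((1 + mbar3 (tripodJoint π q) i) * cov3 (tripodJoint π q) j k -
        thirdCentral3 (tripodJoint π q)) ^ 2 ∧
    thirdCentral3 (tripodJoint π q) ^ 2 + 4 * cov3 (tripodJoint π q) 0 1 *
        cov3 (tripodJoint π q) 0 2 * cov3 (tripodJoint π q) 1 2 ≤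
      ((1 - mbar3 (tripodJoint π q) i) * cov3 (tripodJoint π q) j k +
        thirdCentral3 (tripodJoint π q)) ^ 2 := by
  rw [hyperdet_tripodJoint hπ1 hq1 hij hik hjk,
    one_add_mbar3_mul_cov3_sub_thirdCentral3_tripodJoint hπ1 hq1 hij hik hjk,
    one_sub_mbar3_mul_cov3_add_thirdCentral3_tripodJoint hπ1 hq1 hij hik hjk]
  constructor
  · rw [tripodContrast_eq_sub_zero hq1, add_comm (q i 0 0)]
    exact sq_mul_sub_le_sq_mul_add _ (hq i 0 1) (hq i 0 0)
  · exact sq_mul_sub_le_sq_mul_add _ (hq i 1 0) (hq i 1 1)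

end Tripod

theorem tripod_hyperdet_sign_bounds_general (π : Fin 2 → ℝ) (q : Fin 3 → Fin 2 → Fin 2 → ℝ)
    (hπ1 : π 0 + π 1 = 1)
    (hq : ∀ i a h, 0 ≤ q i a h) (hq1 : ∀ i h, q i 0 h + q i 1 h = 1)
    (p : (Fin 3 → Fin 2) → ℝ) (hp : p = tripodJoint π q)
    (DetP : ℝ)
    (hDet : DetP = thirdCentral3 p ^ 2 + 4 * cov3 p 0 1 * cov3 p 0 2 * cov3 p 1 2) :
    (DetP ≤ ((1 + mbar3 p 0) * cov3 p 1 2 - thirdCentral3 p) ^ 2 ∧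
       DetP ≤ ((1 - mbar3 p 0) * cov3 p 1 2 + thirdCentral3 p) ^ 2) ∧
      (DetP ≤ ((1 + mbar3 p 1) * cov3 p 0 2 - thirdCentral3 p) ^ 2 ∧
        DetP ≤ ((1 - mbar3 p 1) * cov3 p 0 2 + thirdCentral3 p) ^ 2) ∧
      (DetP ≤ ((1 + mbar3 p 2) * cov3 p 0 1 - thirdCentral3 p) ^ 2 ∧
        DetP ≤ ((1 - mbar3 p 2) * cov3 p 0 1 + thirdCentral3 p) ^ 2) := by
  subst hp hDet
  exact ⟨tripod_hyperdet_sign_bounds_of_ne hq hπ1 hq1 (by decide) (by decide) (by decide),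
    tripod_hyperdet_sign_bounds_of_ne hq hπ1 hq1 (by decide) (by decide) (by decide),
    tripod_hyperdet_sign_bounds_of_ne hq hπ1 hq1 (by decide) (by decide) (by decide)⟩

/-- In the tripod model, for each `i` and `{j,k}` the complement,
`Det P ≤ ((1 + μ̄_i)μ_{jk} − μ_{123})²` and `Det P ≤ ((1 − μ̄_i)μ_{jk} + μ_{123})²`. -/
theorem tripod_hyperdet_sign_bounds (π : Fin 2 → ℝ) (q : Fin 3 → Fin 2 → Fin 2 → ℝ)
    (hπ : ∀ h, 0 ≤ π h) (hπ1 : π 0 + π 1 = 1)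
    (hq : ∀ i a h, 0 ≤ q i a h) (hq1 : ∀ i h, q i 0 h + q i 1 h = 1)
    (p : (Fin 3 → Fin 2) → ℝ) (hp : p = tripodJoint π q)
    (DetP : ℝ)
    (hDet : DetP = thirdCentral3 p ^ 2 + 4 * cov3 p 0 1 * cov3 p 0 2 * cov3 p 1 2) :
    (DetP ≤ ((1 + mbar3 p 0) * cov3 p 1 2 - thirdCentral3 p) ^ 2 ∧
       DetP ≤ ((1 - mbar3 p 0) * cov3 p 1 2 + thirdCentral3 p) ^ 2) ∧
      (DetP ≤ ((1 + mbar3 p 1) * cov3 p 0 2 - thirdCentral3 p) ^ 2 ∧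
        DetP ≤ ((1 - mbar3 p 1) * cov3 p 0 2 + thirdCentral3 p) ^ 2) ∧
      (DetP ≤ ((1 + mbar3 p 2) * cov3 p 0 1 - thirdCentral3 p) ^ 2 ∧
        DetP ≤ ((1 - mbar3 p 2) * cov3 p 0 1 + thirdCentral3 p) ^ 2) :=
  tripod_hyperdet_sign_bounds_general π q hπ1 hq hq1 p hp DetP hDet
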